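/- arXiv:1510.08311 — 3 statements merged into one kernel-verified Lean document; each statement's English description precedes it below -/
import Mathlib

section
/- Let p, q > 3 be integers with (p-2)(q-2) > 4, and define a, b by a₁ = q, b₁ = q(p-3), a_{i+1} = (q-3)a_i + (q-2)b_i, b_{i+1} = ((q-3)(p-3)-1)a_i + ((q-2)(p-3)-1)b_i. Then lim_{i→∞} a_{i+1}/a_i = z₁, where z₁ = (c+√(c²-4))/2 and c = (p-2)(q-2)-2. -/
open Filter

theorem stmt_4 (p q : ℤ) (hp : 3 < p) (hq : 3 < q) (hpq : 4 < (p - 2) * (q - 2))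
    (a b : ℕ → ℝ) (ha1 : a 1 = q) (hb1 : b 1 = q * ((p : ℝ) - 3))
    (ha : ∀ i ≥ 1, a (i + 1) = ((q : ℝ) - 3) * a i + ((q : ℝ) - 2) * b i)
    (hb : ∀ i ≥ 1, b (i + 1) = (((q : ℝ) - 3) * ((p : ℝ) - 3) - 1) * a i
        + (((q : ℝ) - 2) * ((p : ℝ) - 3) - 1) * b i)
    (c : ℝ) (hc : c = ((p : ℝ) - 2) * ((q : ℝ) - 2) - 2)
    (z₁ : ℝ) (hz₁ : z₁ = (c + Real.sqrt (c ^ 2 - 4)) / 2) :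
    Tendsto (fun i => a (i + 1) / a i) atTop (nhds z₁) := by
  have hq4 : (4 : ℝ) ≤ (q : ℝ) := by exact_mod_cast (by omega : (4:ℤ) ≤ q)
  have hp4 : (4 : ℝ) ≤ (p : ℝ) := by exact_mod_cast (by omega : (4:ℤ) ≤ p)
  have hpq' : (4 : ℝ) < ((p:ℝ) - 2) * ((q:ℝ) - 2) := by exact_mod_cast hpq
  have hc2 : 2 < c := by rw [hc]; linarith
  have hs : 0 < c ^ 2 - 4 := by nlinarith
  have hsq : Real.sqrt (c ^ 2 - 4) ^ 2 = c ^ 2 - 4 := Real.sq_sqrt hs.le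
  have hsqpos : 0 < Real.sqrt (c ^ 2 - 4) := Real.sqrt_pos.mpr hs
  have hz1gt : 1 < z₁ := by rw [hz₁]; linarith
  have hz1pos : 0 < z₁ := by linarith
  obtain ⟨z₂, h1, hsum, hz2pos, hz2lt1⟩ :
      ∃ z₂ : ℝ, z₁ * z₂ = 1 ∧ z₁ + z₂ = c ∧ 0 < z₂ ∧ z₂ < 1 := by
    refine ⟨(c - Real.sqrt (c ^ 2 - 4)) / 2, ?_, ?_, ?_, ?_⟩
    · rw [hz₁]; linear_combination (-1/4 : ℝ) * hsq
    · rw [hz₁]; ring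
    · have h1' : z₁ * ((c - Real.sqrt (c ^ 2 - 4)) / 2) = 1 := by
        rw [hz₁]; linear_combination (-1/4 : ℝ) * hsq
      nlinarith
    · have h1' : z₁ * ((c - Real.sqrt (c ^ 2 - 4)) / 2) = 1 := by
        rw [hz₁]; linear_combination (-1/4 : ℝ) * hsq
      nlinarith
  have hzdiff : 0 < z₁ - z₂ := by linarith
  have hne : z₁ - z₂ ≠ 0 := ne_of_gt hzdiff
  -- second-order recurrence
  have h2 : ∀ i ≥ 1, a (i + 2) = c * a (i + 1) - a i := by
    intro i hi
    have e1 := ha i hi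
    have e2 := ha (i + 1) (by omega)
    have e3 := hb i hi
    rw [e2, e3, hc]
    linear_combination ((q:ℝ) - 1 - ((p:ℝ) - 2) * ((q:ℝ) - 2)) * e1
  have ha2 : a 2 = ((q:ℝ) - 3) * (q:ℝ) + ((q:ℝ) - 2) * ((q:ℝ) * ((p:ℝ) - 3)) := by
    have := ha 1 le_rfl
    rw [ha1, hb1] at this
    exact this
  obtain ⟨A, B, hbase1, hbase2, hAz⟩ :
      ∃ A B : ℝ, A * z₁ + B * z₂ = a 1 ∧ A * z₁ ^ 2 + B * z₂ ^ 2 = a 2 ∧ 0 < A := by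
    refine ⟨z₂ * (a 2 - a 1 * z₂) / (z₁ - z₂), z₁ * (a 1 * z₁ - a 2) / (z₁ - z₂), ?_, ?_, ?_⟩
    · field_simp
      linear_combination (a 1 * (z₁ - z₂)) * h1
    · field_simp
      linear_combination (a 2 * (z₁ - z₂)) * h1
    · apply div_pos _ hzdiff
      apply mul_pos hz2pos
      rw [ha1, ha2]
      nlinarith
  have hform2 : ∀ k : ℕ, a (k + 1) = A * z₁ ^ (k + 1) + B * z₂ ^ (k + 1) ∧
      a (k + 2) = A * z₁ ^ (k + 2) + B * z₂ ^ (k + 2) := by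
    intro k
    induction k with
    | zero =>
      refine ⟨by simpa using hbase1.symm, by simpa using hbase2.symm⟩
    | succ n ih =>
      refine ⟨ih.2, ?_⟩
      have hrec := h2 (n + 1) (by omega)
      rw [show n + 1 + 2 = n + 3 from rfl] at hrec
      rw [show n + 1 + 1 + 1 = n + 3 from rfl, hrec, ih.1, ih.2]
      linear_combination (A * z₁ ^ (n + 1) + B * z₂ ^ (n + 1)) * h1 -
        (A * z₁ ^ (n + 2) + B * z₂ ^ (n + 2)) * hsum
  have hform : ∀ i : ℕ, 1 ≤ i → a i = A * z₁ ^ i + B * z₂ ^ i := by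
    intro i hi
    obtain ⟨k, rfl⟩ : ∃ k, i = k + 1 := ⟨i - 1, by omega⟩
    exact (hform2 k).1
  -- the key cancellation
  have hk : ∀ i : ℕ, z₁ ^ i * (z₂ ^ 2) ^ i = z₂ ^ i := by
    intro i
    rw [← mul_pow]
    congr 1
    linear_combination z₂ * h1
  have hz1ne : z₁ ≠ 0 := ne_of_gt hz1pos
  -- limits
  have hr0 : Tendsto (fun i : ℕ => (z₂ ^ 2) ^ i) atTop (nhds 0) := by
    apply tendsto_pow_atTop_nhds_zero_of_lt_one (by positivity)
    nlinarith
  have hnum : Tendsto (fun i : ℕ => A * z₁ + B * z₂ * (z₂ ^ 2) ^ i) atTop (nhds (A * z₁)) := by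
    have := (hr0.const_mul (B * z₂)).const_add (A * z₁)
    simpa using this
  have hden : Tendsto (fun i : ℕ => A + B * (z₂ ^ 2) ^ i) atTop (nhds A) := by
    have := (hr0.const_mul B).const_add A
    simpa using this
  have hdiv : Tendsto (fun i : ℕ => (A * z₁ + B * z₂ * (z₂ ^ 2) ^ i) / (A + B * (z₂ ^ 2) ^ i))
      atTop (nhds z₁) := by
    have hq' := hnum.div hden (ne_of_gt hAz)
    rw [mul_div_cancel_left₀ z₁ (ne_of_gt hAz)] at hq'
    exact hq'
  apply Tendsto.congr' _ hdiv
  rw [Filter.eventuallyEq_iff_exists_mem]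
  refine ⟨Set.Ici 1, Ici_mem_atTop 1, fun i hi => ?_⟩
  have hi1 : 1 ≤ i := hi
  have e1 : a i = z₁ ^ i * (A + B * (z₂ ^ 2) ^ i) := by
    rw [hform i hi1]
    linear_combination (-B) * hk i
  have e2 : a (i + 1) = z₁ ^ i * (A * z₁ + B * z₂ * (z₂ ^ 2) ^ i) := by
    rw [hform (i + 1) (by omega)]
    linear_combination (-B * z₂) * hk i
  simp only
  rw [e1, e2, mul_div_mul_left _ _ (pow_ne_zero i hz1ne)]
end

section
/- Let p, q > 3 be integers with (p-2)(q-2) > 4 and let b be defined by b₁ = q(p-3) together with the tree recursion (a₁ = q, a_{i+1} = (q-3)a_i + (q-2)b_i, b_{i+1} = ((q-3)(p-3)-1)a_i + ((q-2)(p-3)-1)b_i). Then lim_{i→∞} b_i / (∑_{j=1}^{i} b_j) = (z₁ - 1)/z₁, where z₁ = (c+√(c²-4))/2 and c = (p-2)(q-2)-2. -/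
/-!
The recursion matrix has trace `c` and determinant `1`, so by Cayley–Hamilton `b` satisfies
`b (i + 2) = c * b (i + 1) - b i`, whose characteristic roots are `z₁` and `z₁⁻¹`. Hence
`b i = A * z₁ ^ i + B * z₁ ^ (-i)` with `A > 0` (as `b 2 > z₁⁻¹ * b 1`), so `b i` and the partial
sums grow like `A * z₁ ^ i` and `A * z₁ ^ i * z₁ / (z₁ - 1)`, a geometric series.
-/

open Filter Topology Finset

theorem snd_eq_trace_mul_sub_det_mul {R : Type*} [CommRing R] {x y : ℕ → R} {α β γ δ : R}
    (hx : ∀ n, x (n + 1) = α * x n + β * y n) (hy : ∀ n, y (n + 1) = γ * x n + δ * y n)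
    (n : ℕ) : y (n + 2) = (α + δ) * y (n + 1) - (α * δ - β * γ) * y n := by
  rw [hy (n + 1), hx n, hy n]
  ring

section QuadraticRoot

variable {c z : ℝ}

theorem one_lt_of_eq_quadratic_root (hc : 2 < c) (hz : z = (c + √(c ^ 2 - 4)) / 2) : 1 < z := by
  have : 0 ≤ √(c ^ 2 - 4) := Real.sqrt_nonneg _
  rw [hz]
  linarith

theorem add_inv_eq_of_eq_quadratic_root (hc : 2 ≤ c) (hz : z = (c + √(c ^ 2 - 4)) / 2) :
    z + z⁻¹ = c := by
  have hs : √(c ^ 2 - 4) ^ 2 = c ^ 2 - 4 := Real.sq_sqrt (by nlinarith)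
  have hinv : z⁻¹ = (c - √(c ^ 2 - 4)) / 2 :=
    inv_eq_of_mul_eq_one_right (by rw [hz]; linear_combination (-1 / 4 : ℝ) * hs)
  rw [hinv, hz]
  ring

end QuadraticRoot

section TwoStepRecurrence

variable {z w A B : ℝ} {u : ℕ → ℝ}

theorem eq_mul_pow_add_mul_pow_of_recurrence (hzw : z ≠ w)
    (hu : ∀ n, u (n + 2) = (z + w) * u (n + 1) - z * w * u n) (n : ℕ) :
    u n = (u 1 - w * u 0) / (z - w) * z ^ n + (z * u 0 - u 1) / (z - w) * w ^ n := by
  have hzw' : z - w ≠ 0 := sub_ne_zero.mpr hzw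
  induction n using Nat.twoStepInduction with
  | zero => field_simp; ring
  | one => field_simp; ring
  | more n h₀ h₁ => rw [hu, h₁, h₀]; ring

theorem tendsto_div_pow_of_eq (hw : |w| < z) (hu : ∀ n, u n = A * z ^ n + B * w ^ n) :
    Tendsto (fun n => u n / z ^ n) atTop (𝓝 A) := by
  have hz : 0 < z := (abs_nonneg w).trans_lt hw
  have hwz : Tendsto (fun n => (w / z) ^ n) atTop (𝓝 0) :=
    tendsto_pow_atTop_nhds_zero_of_abs_lt_one (by rwa [abs_div, abs_of_pos hz, div_lt_one hz])
  have h := (hwz.const_mul B).const_add A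
  rw [mul_zero, add_zero] at h
  refine h.congr fun n => ?_
  rw [hu, div_pow]
  field_simp

theorem tendsto_geom_sum_div_pow (hz : 1 < z) :
    Tendsto (fun n => (∑ j ∈ range (n + 1), z ^ j) / z ^ n) atTop (𝓝 (z / (z - 1))) := by
  have hz0 : z ≠ 0 := by positivity
  have hz1 : z - 1 ≠ 0 := sub_ne_zero.mpr hz.ne'
  have h := ((tendsto_pow_atTop_nhds_zero_of_lt_one (inv_nonneg.mpr (by positivity))
    (inv_lt_one_of_one_lt₀ hz)).const_sub z).div_const (z - 1)
  rw [sub_zero] at h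
  refine h.congr fun n => ?_
  rw [geom_sum_eq hz.ne', inv_pow, pow_succ]
  field_simp

theorem tendsto_geom_sum_div_pow_zero (hw : |w| < 1) (hz : 1 < z) :
    Tendsto (fun n => (∑ j ∈ range (n + 1), w ^ j) / z ^ n) atTop (𝓝 0) := by
  have hsum := ((hasSum_geometric_of_abs_lt_one hw).tendsto_sum_nat).comp (tendsto_add_atTop_nat 1)
  have h := hsum.mul (tendsto_pow_atTop_nhds_zero_of_lt_one (inv_nonneg.mpr (by positivity))
    (inv_lt_one_of_one_lt₀ hz))
  rw [mul_zero] at h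
  refine h.congr fun n => ?_
  rw [Function.comp_apply, inv_pow, div_eq_mul_inv]

theorem tendsto_sum_range_div_pow_of_eq (hz : 1 < z) (hw : |w| < 1)
    (hu : ∀ n, u n = A * z ^ n + B * w ^ n) :
    Tendsto (fun n => (∑ j ∈ range (n + 1), u j) / z ^ n) atTop (𝓝 (A * (z / (z - 1)))) := by
  have h := ((tendsto_geom_sum_div_pow hz).const_mul A).add
    ((tendsto_geom_sum_div_pow_zero hw hz).const_mul B)
  rw [mul_zero, add_zero] at h
  refine h.congr fun n => ?_
  simp only [hu, sum_add_distrib, ← mul_sum]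
  ring

theorem tendsto_div_sum_range_of_eq (hz : 1 < z) (hw : |w| < 1) (hA : A ≠ 0)
    (hu : ∀ n, u n = A * z ^ n + B * w ^ n) :
    Tendsto (fun n => u n / ∑ j ∈ range (n + 1), u j) atTop (𝓝 ((z - 1) / z)) := by
  have hz0 : z ≠ 0 := by positivity
  have hz1 : z - 1 ≠ 0 := sub_ne_zero.mpr hz.ne'
  have h := (tendsto_div_pow_of_eq (hw.trans hz) hu).div
    (tendsto_sum_range_div_pow_of_eq hz hw hu) (by positivity)
  rw [show A / (A * (z / (z - 1))) = (z - 1) / z by field_simp] at h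
  refine h.congr fun n => ?_
  exact div_div_div_cancel_right₀ (pow_ne_zero n hz0) _ _

theorem tendsto_div_sum_range_of_recurrence (hz : 1 < z)
    (hu : ∀ n, u (n + 2) = (z + z⁻¹) * u (n + 1) - u n) (h₀₁ : u 1 ≠ z⁻¹ * u 0) :
    Tendsto (fun n => u n / ∑ j ∈ range (n + 1), u j) atTop (𝓝 ((z - 1) / z)) := by
  have hz0 : z ≠ 0 := by positivity
  have hzz : z ≠ z⁻¹ := fun h => by
    have := inv_lt_one_of_one_lt₀ hz
    linarith
  refine tendsto_div_sum_range_of_eq hz ?_ ?_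
    (eq_mul_pow_add_mul_pow_of_recurrence hzz fun n => by rw [hu, mul_inv_cancel₀ hz0, one_mul])
  · rw [abs_inv, abs_of_pos (by positivity)]
    exact inv_lt_one_of_one_lt₀ hz
  · exact div_ne_zero (sub_ne_zero.mpr h₀₁) (sub_ne_zero.mpr hzz)

end TwoStepRecurrence

theorem stmt_8 (p q : ℤ) (hp : 3 < p) (hq : 3 < q) (hpq : 4 < (p - 2) * (q - 2))
    (a b : ℕ → ℝ) (ha1 : a 1 = q) (hb1 : b 1 = q * ((p : ℝ) - 3))
    (ha : ∀ i ≥ 1, a (i + 1) = ((q : ℝ) - 3) * a i + ((q : ℝ) - 2) * b i)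
    (hb : ∀ i ≥ 1, b (i + 1) = (((q : ℝ) - 3) * ((p : ℝ) - 3) - 1) * a i
        + (((q : ℝ) - 2) * ((p : ℝ) - 3) - 1) * b i)
    (c : ℝ) (hc : c = ((p : ℝ) - 2) * ((q : ℝ) - 2) - 2)
    (z₁ : ℝ) (hz₁ : z₁ = (c + Real.sqrt (c ^ 2 - 4)) / 2) :
    Tendsto (fun i => b i / ∑ j ∈ Finset.Icc 1 i, b j) atTop (nhds ((z₁ - 1) / z₁)) := by
  have hp' : (4 : ℝ) ≤ p := by exact_mod_cast hp
  have hq' : (4 : ℝ) ≤ q := by exact_mod_cast hq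
  have hpq' : (4 : ℝ) < (p - 2) * (q - 2) := by exact_mod_cast hpq
  have hc2 : 2 < c := by rw [hc]; linarith
  have hz : 1 < z₁ := one_lt_of_eq_quadratic_root hc2 hz₁
  have hrec : ∀ n, b (n + 1 + 2) = (z₁ + z₁⁻¹) * b (n + 1 + 1) - b (n + 1) := fun n => by
    rw [snd_eq_trace_mul_sub_det_mul (x := fun n => a (n + 1)) (fun n => ha (n + 1) (by omega))
      (fun n => hb (n + 1) (by omega)) n, add_inv_eq_of_eq_quadratic_root hc2.le hz₁, hc]
    ring
  have hb2 : z₁⁻¹ * b 1 < b 2 := by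
    have hb1_pos : 0 < b 1 := by rw [hb1]; exact mul_pos (by linarith) (by linarith)
    have : b 1 ≤ b 2 := by rw [hb 1 le_rfl, ha1, hb1]; nlinarith
    nlinarith [inv_lt_one_of_one_lt₀ hz]
  have h := tendsto_div_sum_range_of_recurrence (u := fun n => b (n + 1)) hz hrec hb2.ne'
  rw [← tendsto_add_atTop_iff_nat 1]
  refine h.congr fun n => ?_
  rw [← Ico_add_one_right_eq_Icc, sum_Ico_eq_sum_range]
  simp only [add_comm 1, Nat.add_sub_cancel]
end

section
/- Let a, b be defined by a₁ = 5, b₁ = 5, a_{i+1} = 2a_i + 3b_i, b_{i+1} = a_i + 2b_i. Then lim_{i→∞} b_i/(a_i + b_i) = (√3 - 1)/2. -/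
open Filter

theorem stmt_13 (a b : ℕ → ℝ) (ha1 : a 1 = 5) (hb1 : b 1 = 5)
    (ha : ∀ i ≥ 1, a (i + 1) = 2 * a i + 3 * b i)
    (hb : ∀ i ≥ 1, b (i + 1) = a i + 2 * b i) :
    Tendsto (fun i => b i / (a i + b i)) atTop (nhds ((Real.sqrt 3 - 1) / 2)) := by
  set s := Real.sqrt 3 with hsdef
  have hs2 : s ^ 2 = 3 := Real.sq_sqrt (by norm_num)
  have hs0 : 0 ≤ s := Real.sqrt_nonneg 3
  have hs1 : 1 < s := by nlinarith
  have hs2' : s < 2 := by nlinarith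
  -- positivity
  have hpos : ∀ i, 1 ≤ i → 0 < a i ∧ 0 < b i := by
    intro i hi
    induction i with
    | zero => omega
    | succ n ih =>
      rcases Nat.lt_or_ge n 1 with h | h
      · have hn0 : n = 0 := by omega
        subst hn0
        exact ⟨by rw [ha1]; norm_num, by rw [hb1]; norm_num⟩
      · obtain ⟨hA, hB⟩ := ih h
        rw [ha n h, hb n h]
        constructor <;> nlinarith
  -- closed form
  have key : ∀ i, 1 ≤ i → a i + s * b i = 5 * (1 + s) * (2 + s) ^ (i - 1) ∧
      a i - s * b i = 5 * (1 - s) * (2 - s) ^ (i - 1) := by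
    intro i hi
    induction i with
    | zero => omega
    | succ n ih =>
      rcases Nat.lt_or_ge n 1 with h | h
      · have hn0 : n = 0 := by omega
        subst hn0
        simp [ha1, hb1]
        constructor <;> ring
      · obtain ⟨h1, h2⟩ := ih h
        have hk : n + 1 - 1 = (n - 1) + 1 := by omega
        rw [ha n h, hb n h, hk, pow_succ, pow_succ]
        constructor
        · linear_combination (2 + s) * h1 - (b n) * hs2
        · linear_combination (2 - s) * h2 - (b n) * hs2
  set r : ℝ := (2 - s) / (2 + s) with hrdef
  have hq : (0:ℝ) < 2 - s := by linarith
  have hp : (0:ℝ) < 2 + s := by linarith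
  have hr0 : 0 < r := div_pos hq hp
  have hr1 : r < 1 := (div_lt_one hp).mpr (by linarith)
  have hsne : (2 * s : ℝ) ≠ 0 := by positivity
  -- eventual equality
  have heq : ∀ i, 1 ≤ i → b i / (a i + b i) =
      ((1 + s) - (1 - s) * r ^ (i - 1)) / ((1 + s) ^ 2 - (s - 1) ^ 2 * r ^ (i - 1)) := by
    intro i hi
    obtain ⟨h1, h2⟩ := key i hi
    obtain ⟨hA, hB⟩ := hpos i hi
    set x : ℝ := r ^ (i - 1) with hxdef
    have hx0 : 0 < x := pow_pos hr0 _
    have hx1 : x ≤ 1 := pow_le_one₀ hr0.le hr1.le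
    have hden : 0 < (1 + s) ^ 2 - (s - 1) ^ 2 * x := by nlinarith
    have hab : 0 < a i + b i := by linarith
    rw [div_eq_div_iff (ne_of_gt hab) (ne_of_gt hden)]
    have hPpos : (0:ℝ) < (2 + s) ^ (i - 1) := pow_pos hp _
    have hQ : (2 - s) ^ (i - 1) = x * (2 + s) ^ (i - 1) := by
      rw [hxdef, hrdef, div_pow, div_mul_cancel₀ _ (ne_of_gt hPpos)]
    rw [hQ] at h2
    have h2sb : 2 * s * b i = 5 * (1 + s) * (2 + s) ^ (i - 1)
        - 5 * (1 - s) * (x * (2 + s) ^ (i - 1)) := by linarith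
    have h2a : 2 * a i = 5 * (1 + s) * (2 + s) ^ (i - 1)
        + 5 * (1 - s) * (x * (2 + s) ^ (i - 1)) := by linarith
    refine mul_left_cancel₀ hsne ?_
    linear_combination (((1 + s) ^ 2 - (s - 1) ^ 2 * x) - ((1 + s) - (1 - s) * x)) * h2sb
      - s * ((1 + s) - (1 - s) * x) * h2a
  -- limit
  have hx_to : Tendsto (fun i : ℕ => r ^ (i - 1)) atTop (nhds 0) := by
    have h1 : Tendsto (fun n : ℕ => r ^ n) atTop (nhds 0) :=
      tendsto_pow_atTop_nhds_zero_of_lt_one hr0.le hr1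
    exact h1.comp (tendsto_sub_atTop_nat 1)
  have hnum : Tendsto (fun i : ℕ => (1 + s) - (1 - s) * r ^ (i - 1)) atTop
      (nhds ((1 + s) - (1 - s) * 0)) := tendsto_const_nhds.sub (tendsto_const_nhds.mul hx_to)
  have hden : Tendsto (fun i : ℕ => (1 + s) ^ 2 - (s - 1) ^ 2 * r ^ (i - 1)) atTop
      (nhds ((1 + s) ^ 2 - (s - 1) ^ 2 * 0)) :=
    tendsto_const_nhds.sub (tendsto_const_nhds.mul hx_to)
  have hdne : (1 + s) ^ 2 - (s - 1) ^ 2 * 0 ≠ 0 := by nlinarith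
  have hlim := hnum.div hden hdne
  have hval : ((1 + s) - (1 - s) * 0) / ((1 + s) ^ 2 - (s - 1) ^ 2 * 0) = (s - 1) / 2 := by
    rw [mul_zero, mul_zero, sub_zero, sub_zero]
    rw [div_eq_div_iff (by positivity) (by norm_num)]
    linear_combination (-(1 + s)) * hs2
  rw [hval] at hlim
  exact Tendsto.congr' (by
    filter_upwards [eventually_ge_atTop 1] with i hi
    exact (heq i hi).symm) hlim
end
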